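/- Let 1 ≤ m ≤ n < N/2, s ≥ 2, w ≥ 1, and 1 ≤ t ≤ s. If the set disjointness problem with parameters m, n, N has (s,w,t)-certificates, then for every real δ with 0 < δ < 1, either t·(w + log₂ s) ≥ n^{1−δ} or t·log₂ s ≥ m·(δ·log₂ n − 1). -/

import Mathlib

/-- `f` has `(s,w,t)`-certificates: there is a code `T : Y → Σ^s` with alphabet
`Σ = {0,1}^w` such that for every query `x` and database `y` some set `P` of at
most `t` cells determines the answer `f (x, y)`. -/
def HasCertificates {X Y Z : Type*} (f : X × Y → Z) (s w t : ℕ) : Prop :=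
  ∃ T : Y → Fin s → (Fin w → Bool),
    ∀ x : X, ∀ y : Y, ∃ P : Finset (Fin s), P.card ≤ t ∧
      ∀ y' : Y, (∀ i ∈ P, T y' i = T y i) → f (x, y') = f (x, y)

/-- The set disjointness problem on universe `{1,…,N}` with parameters `m, n`: queries are
`m`-element subsets, databases are `n`-element subsets, and the answer is `1` iff the two
sets are disjoint. -/
def setDisj (N m n : ℕ) :
    {x : Finset (Fin N) // x.card = m} × {y : Finset (Fin N) // y.card = n} → Fin 2 :=
  fun p => if Disjoint p.1.val p.2.val then 1 else 0

/-!
Averaging over fibers gives a database `y₀` such that, for every set `Q` of `t` cells, at least a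
`1 / (C(s,t) 2^{wt})` fraction of the `C(N,n)` databases agree with `y₀` on `Q`. Let `U_Q` be the
union of the queries that are disjoint from `y₀` and certified by `Q` at `y₀`. A database agreeing
with `y₀` on `Q` must avoid `U_Q`, so `C(N,n) ≤ C(s,t) 2^{wt} C(N - |U_Q|, n)`, which forces
`2^{n |U_Q|} ≤ (C(s,t) 2^{wt})^{N-n}`. On the other hand every `m`-subset of the complement of
`y₀` lies in some `U_Q`, so the largest `U_Q`, of size `u`, has `(N-n)^m ≤ C(s,t) u^m`.
If `t (w + log₂ s) < n^{1-δ}`, the first bound gives `n^δ u ≤ N - n`, and then the second gives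
`n^{δ m} ≤ C(s,t) ≤ s^t`.
-/

open Finset

theorem Finset.sum_inv_card_fiber_le {Y V : Type*} [Fintype Y] [Fintype V] [DecidableEq V]
    (g : Y → V) : ∑ y, (#{y' | g y' = g y} : ℚ)⁻¹ ≤ Fintype.card V := by
  rw [← sum_fiberwise_of_maps_to (t := univ) (g := g) (fun _ _ => mem_univ _)]
  calc ∑ v, ∑ y ∈ {y | g y = v}, (#{y' | g y' = g y} : ℚ)⁻¹
      = ∑ v, (#{y | g y = v} : ℚ) * (#{y | g y = v} : ℚ)⁻¹ := by
        refine sum_congr rfl fun v _ => ?_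
        rw [← nsmul_eq_mul, ← sum_const]
        exact sum_congr rfl fun y hy => by rw [(mem_filter.1 hy).2]
    _ ≤ ∑ _v : V, (1 : ℚ) := sum_le_sum fun _ _ => mul_inv_le_one
    _ = Fintype.card V := by simp

theorem Finset.exists_forall_card_le_mul_card_fiber {ι Y : Type*} {V : ι → Type*} [Fintype Y]
    [Nonempty Y] [∀ i, Fintype (V i)] [∀ i, DecidableEq (V i)] (S : Finset ι)
    (g : ∀ i, Y → V i) (K : ℕ) (hK : ∀ i ∈ S, Fintype.card (V i) ≤ K) :
    ∃ y, ∀ i ∈ S, Fintype.card Y ≤ #S * K * #{y' | g i y' = g i y} := by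
  have hY : (0 : ℚ) < Fintype.card Y := by exact_mod_cast Fintype.card_pos
  have hsum : ∑ y, ∑ i ∈ S, (#{y' | g i y' = g i y} : ℚ)⁻¹
      ≤ ∑ _y : Y, (#S * K : ℚ) / Fintype.card Y := by
    rw [sum_comm, sum_const, card_univ, nsmul_eq_mul, mul_div_cancel₀ _ hY.ne', ← nsmul_eq_mul,
      ← sum_const]
    exact sum_le_sum fun i hi => (sum_inv_card_fiber_le (g i)).trans (by exact_mod_cast hK i hi)
  obtain ⟨y, -, hy⟩ := exists_le_of_sum_le univ_nonempty hsum
  refine ⟨y, fun i hi => ?_⟩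
  have hfiber : (0 : ℚ) < #{y' | g i y' = g i y} := by
    exact_mod_cast card_pos.2 ⟨y, by simp⟩
  have := (single_le_sum (fun j _ => by positivity) hi).trans hy
  rw [inv_le_iff_one_le_mul₀ hfiber, div_mul_eq_mul_div, one_le_div₀ hY] at this
  exact_mod_cast this

theorem exists_forall_card_le_mul_card_restrict_eq {ι Y α : Type*} [Fintype ι] [DecidableEq ι]
    [Fintype Y] [Nonempty Y] [Fintype α] [DecidableEq α] (T : Y → ι → α) (t : ℕ) :
    ∃ y₀, ∀ Q ∈ powersetCard t (univ : Finset ι), Fintype.card Y ≤ (Fintype.card ι).choose t *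
      Fintype.card α ^ t * #{y | Q.restrict (T y) = Q.restrict (T y₀)} := by
  simpa using exists_forall_card_le_mul_card_fiber (powersetCard t univ)
    (fun Q y => Q.restrict (T y)) (Fintype.card α ^ t) fun Q hQ => by simp_all

namespace Nat

theorem descFactorial_mul_pow_le_descFactorial_mul_pow {u a : ℕ} (h : u ≤ a) (j : ℕ) :
    u.descFactorial j * a ^ j ≤ a.descFactorial j * u ^ j := by
  induction j with
  | zero => simp
  | succ j ih =>
    have hstep : (u - j) * a ≤ (a - j) * u := by
      rw [Nat.sub_mul, Nat.sub_mul, Nat.mul_comm u a]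
      exact Nat.sub_le_sub_left (Nat.mul_le_mul_left j h) _
    calc u.descFactorial (j + 1) * a ^ (j + 1)
        = ((u - j) * a) * (u.descFactorial j * a ^ j) := by
          rw [descFactorial_succ, pow_succ]; ring
      _ ≤ ((a - j) * u) * (a.descFactorial j * u ^ j) := Nat.mul_le_mul hstep ih
      _ = a.descFactorial (j + 1) * u ^ (j + 1) := by rw [descFactorial_succ, pow_succ]; ring

theorem choose_mul_pow_le_choose_mul_pow {u a : ℕ} (h : u ≤ a) (j : ℕ) :
    u.choose j * a ^ j ≤ a.choose j * u ^ j := by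
  have := descFactorial_mul_pow_le_descFactorial_mul_pow h j
  rw [descFactorial_eq_factorial_mul_choose, descFactorial_eq_factorial_mul_choose,
    Nat.mul_assoc, Nat.mul_assoc] at this
  exact Nat.le_of_mul_le_mul_left this j.factorial_pos

theorem two_pow_mul_pow_le_add_pow {b c : ℕ} (h : c ≤ b) : 2 ^ c * b ^ b ≤ (b + c) ^ b := by
  calc 2 ^ c * b ^ b = ∑ k ∈ range (c + 1), c.choose k * b ^ k * b ^ (b - k) := by
        rw [← sum_range_choose, sum_mul]
        refine sum_congr rfl fun k hk => ?_
        rw [Nat.mul_assoc, ← pow_add, Nat.add_sub_cancel' (by simp at hk; omega)]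
    _ ≤ ∑ k ∈ range (c + 1), c ^ k * b ^ (b - k) * b.choose k := by
        refine sum_le_sum fun k _ => ?_
        calc c.choose k * b ^ k * b ^ (b - k) ≤ b.choose k * c ^ k * b ^ (b - k) :=
              Nat.mul_le_mul_right _ (choose_mul_pow_le_choose_mul_pow h k)
          _ = c ^ k * b ^ (b - k) * b.choose k := by ring
    _ ≤ ∑ k ∈ range (b + 1), c ^ k * b ^ (b - k) * b.choose k :=
        sum_le_sum_of_subset (range_subset_range.2 (by omega))
    _ = (b + c) ^ b := by rw [add_comm b c, add_pow]; simp only [Nat.cast_id]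

theorem choose_mul_pow_le_choose_sub_mul_pow {N n u : ℕ} (hu : u ≤ N) :
    (N - u).choose n * N ^ u ≤ N.choose n * (N - n) ^ u := by
  have hsymm : N.choose n * (N - n).choose u = N.choose u * (N - u).choose n := by
    have h₁ := choose_mul (n := N) (k := n + u) (Nat.le_add_right n u)
    have h₂ := choose_mul (n := N) (k := n + u) (Nat.le_add_left u n)
    rw [Nat.add_sub_cancel_left] at h₁
    rw [Nat.add_sub_cancel, ← choose_symm_add] at h₂
    rw [← h₁, ← h₂]
  have hpos : 0 < N.choose u := choose_pos hu
  refine Nat.le_of_mul_le_mul_left ?_ hpos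
  calc N.choose u * ((N - u).choose n * N ^ u) = N.choose n * ((N - n).choose u * N ^ u) := by
        rw [← Nat.mul_assoc, ← hsymm, Nat.mul_assoc]
    _ ≤ N.choose n * (N.choose u * (N - n) ^ u) :=
        Nat.mul_le_mul_left _ (choose_mul_pow_le_choose_mul_pow (Nat.sub_le N n) u)
    _ = N.choose u * (N.choose n * (N - n) ^ u) := by ring

theorem pow_le_mul_pow_of_choose_le_mul_choose {d m u κ : ℕ} (hmu : m ≤ u) (hud : u ≤ d)
    (h : d.choose m ≤ κ * u.choose m) : d ^ m ≤ κ * u ^ m := by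
  refine Nat.le_of_mul_le_mul_left ?_ (choose_pos hmu)
  calc u.choose m * d ^ m ≤ d.choose m * u ^ m := choose_mul_pow_le_choose_mul_pow hud m
    _ ≤ κ * u.choose m * u ^ m := Nat.mul_le_mul_right _ h
    _ = u.choose m * (κ * u ^ m) := by ring

theorem two_pow_mul_le_pow_of_choose_le_mul_choose {N n u A : ℕ} (hn : 2 * n ≤ N) (hu : u ≤ N)
    (h : N.choose n ≤ A * (N - u).choose n) : 2 ^ (n * u) ≤ A ^ (N - n) := by
  have hpos : 0 < (N - u).choose n :=
    Nat.pos_of_ne_zero fun h0 => (choose_pos (by omega : n ≤ N)).ne' (by simpa [h0] using h)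
  have hratio : N ^ u ≤ A * (N - n) ^ u := by
    refine Nat.le_of_mul_le_mul_left ?_ hpos
    calc (N - u).choose n * N ^ u ≤ N.choose n * (N - n) ^ u :=
          choose_mul_pow_le_choose_sub_mul_pow hu
      _ ≤ A * (N - u).choose n * (N - n) ^ u := Nat.mul_le_mul_right _ h
      _ = (N - u).choose n * (A * (N - n) ^ u) := by ring
  have hbern : 2 ^ n * (N - n) ^ (N - n) ≤ N ^ (N - n) := by
    simpa [Nat.sub_add_cancel (by omega : n ≤ N)] using
      two_pow_mul_pow_le_add_pow (by omega : n ≤ N - n)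
  have hpos' : 0 < (N - n) ^ ((N - n) * u) := by
    rcases Nat.eq_zero_or_pos (N - n) with h0 | h0
    · simp [h0]
    · positivity
  refine Nat.le_of_mul_le_mul_right ?_ hpos'
  calc 2 ^ (n * u) * (N - n) ^ ((N - n) * u) = (2 ^ n * (N - n) ^ (N - n)) ^ u := by
        rw [mul_pow, ← pow_mul, ← pow_mul]
    _ ≤ (N ^ (N - n)) ^ u := Nat.pow_le_pow_left hbern u
    _ = (N ^ u) ^ (N - n) := by rw [← pow_mul, ← pow_mul, mul_comm]
    _ ≤ (A * (N - n) ^ u) ^ (N - n) := Nat.pow_le_pow_left hratio _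
    _ = A ^ (N - n) * (N - n) ^ ((N - n) * u) := by rw [mul_pow, ← pow_mul, mul_comm u]

end Nat

theorem mul_logb_le_logb_of_two_pow_le {n m u d A κ : ℕ} {δ : ℝ} (hn : 0 < n) (hu : 0 < u)
    (h₁ : 2 ^ (n * u) ≤ A ^ d) (h₂ : d ^ m ≤ κ * u ^ m)
    (hA : Real.logb 2 A ≤ (n : ℝ) ^ (1 - δ)) :
    m * (δ * Real.logb 2 n) ≤ Real.logb 2 κ := by
  have hn' : (0 : ℝ) < n := by exact_mod_cast hn
  have hnu : (n * u : ℝ) ≤ d * Real.logb 2 A := by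
    have := Real.logb_le_logb_of_le one_lt_two (by positivity)
      (by exact_mod_cast h₁ : (2 : ℝ) ^ (n * u) ≤ (A : ℝ) ^ d)
    rwa [Real.logb_pow, Real.logb_pow, Real.logb_self_eq_one one_lt_two, mul_one,
      Nat.cast_mul] at this
  have hlin : (n : ℝ) ^ δ * u ≤ d := by
    refine le_of_mul_le_mul_right ?_ (by positivity : (0 : ℝ) < (n : ℝ) ^ (1 - δ))
    calc (n : ℝ) ^ δ * u * (n : ℝ) ^ (1 - δ) = (n : ℝ) ^ (δ + (1 - δ)) * u := by
          rw [Real.rpow_add hn']; ring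
      _ = n * u := by rw [add_sub_cancel, Real.rpow_one]
      _ ≤ d * Real.logb 2 A := hnu
      _ ≤ d * (n : ℝ) ^ (1 - δ) := mul_le_mul_of_nonneg_left hA d.cast_nonneg
  have hpow : ((n : ℝ) ^ δ) ^ m ≤ κ := by
    refine le_of_mul_le_mul_right ?_ (by positivity : (0 : ℝ) < (u : ℝ) ^ m)
    calc ((n : ℝ) ^ δ) ^ m * (u : ℝ) ^ m = ((n : ℝ) ^ δ * u) ^ m := (mul_pow _ _ _).symm
      _ ≤ (d : ℝ) ^ m := pow_le_pow_left₀ (by positivity) hlin m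
      _ ≤ κ * (u : ℝ) ^ m := by exact_mod_cast h₂
  calc m * (δ * Real.logb 2 n) = Real.logb 2 (((n : ℝ) ^ δ) ^ m) := by
        rw [Real.logb_pow, Real.logb_rpow_eq_mul_logb_of_pos hn']
    _ ≤ Real.logb 2 κ := Real.logb_le_logb_of_le one_lt_two (by positivity) hpow

theorem HasCertificates.exists_card_eq {X Y Z : Type*} {f : X × Y → Z} {s w t : ℕ}
    (h : HasCertificates f s w t) (hts : t ≤ s) :
    ∃ (T : Y → Fin s → Fin w → Bool) (P : X → Y → Finset (Fin s)), (∀ x y, #(P x y) = t) ∧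
      ∀ x y y', (∀ i ∈ P x y, T y' i = T y i) → f (x, y') = f (x, y) := by
  obtain ⟨T, hT⟩ := h
  choose P hPcard hP using hT
  choose Q hPQ hQ using fun x y => exists_superset_card_eq (hPcard x y) (by simpa using hts)
  exact ⟨T, Q, hQ, fun x y y' h => hP x y y' fun i hi => h i (hPQ x y hi)⟩

section SetDisjointness

variable {N m n s : ℕ}

theorem setDisj_eq_one_iff {x : {x : Finset (Fin N) // x.card = m}}
    {y : {y : Finset (Fin N) // y.card = n}} : setDisj N m n (x, y) = 1 ↔ Disjoint x.1 y.1 := by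
  simp [setDisj]

def certifiedUnion
    (P : {x : Finset (Fin N) // x.card = m} → {y : Finset (Fin N) // y.card = n} → Finset (Fin s))
    (y₀ : {y : Finset (Fin N) // y.card = n}) (Q : Finset (Fin s)) : Finset (Fin N) :=
  ({x | Disjoint x.1 y₀.1 ∧ P x y₀ = Q} : Finset {x : Finset (Fin N) // x.card = m}).biUnion
    Subtype.val

variable
  {P : {x : Finset (Fin N) // x.card = m} → {y : Finset (Fin N) // y.card = n} → Finset (Fin s)}

theorem disjoint_certifiedUnion_of_restrict_eq {α : Type*}
    {T : {y : Finset (Fin N) // y.card = n} → Fin s → α}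
    (hP : ∀ x y y', (∀ i ∈ P x y, T y' i = T y i) → setDisj N m n (x, y') = setDisj N m n (x, y))
    {y₀ y : {y : Finset (Fin N) // y.card = n}} {Q : Finset (Fin s)}
    (hy : Q.restrict (T y) = Q.restrict (T y₀)) : Disjoint (certifiedUnion P y₀ Q) y.1 := by
  simp only [certifiedUnion, disjoint_biUnion_left, mem_filter, mem_univ, true_and]
  rintro x ⟨hxy₀, rfl⟩
  rw [← setDisj_eq_one_iff, hP x y₀ y fun i hi => congrFun hy ⟨i, hi⟩, setDisj_eq_one_iff]
  exact hxy₀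

theorem card_certifiedUnion_le (y₀ : {y : Finset (Fin N) // y.card = n}) (Q : Finset (Fin s)) :
    #(certifiedUnion P y₀ Q) ≤ N - n := by
  have hdisj : Disjoint (certifiedUnion P y₀ Q) y₀.1 := by
    simp only [certifiedUnion, disjoint_biUnion_left, mem_filter]
    exact fun x hx => hx.2.1
  simpa [card_compl, y₀.2] using card_le_card (subset_compl_iff_disjoint_right.2 hdisj)

theorem card_restrict_eq_le_choose {α : Type*} [DecidableEq α]
    {T : {y : Finset (Fin N) // y.card = n} → Fin s → α}
    (hP : ∀ x y y', (∀ i ∈ P x y, T y' i = T y i) → setDisj N m n (x, y') = setDisj N m n (x, y))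
    (y₀ : {y : Finset (Fin N) // y.card = n}) (Q : Finset (Fin s)) :
    #{y | Q.restrict (T y) = Q.restrict (T y₀)} ≤ (N - #(certifiedUnion P y₀ Q)).choose n := by
  calc #{y | Q.restrict (T y) = Q.restrict (T y₀)}
      ≤ #(powersetCard n (certifiedUnion P y₀ Q)ᶜ) := by
        refine card_le_card_of_injOn Subtype.val (fun y hy => ?_) Subtype.val_injective.injOn
        rw [mem_coe, mem_filter] at hy
        exact mem_powersetCard.2 ⟨subset_compl_iff_disjoint_left.2
          (disjoint_certifiedUnion_of_restrict_eq hP hy.2), y.2⟩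
    _ = (N - #(certifiedUnion P y₀ Q)).choose n := by simp [card_compl]

theorem choose_le_sum_choose_card_certifiedUnion {t : ℕ} (hPcard : ∀ x y, #(P x y) = t)
    (y₀ : {y : Finset (Fin N) // y.card = n}) :
    (N - n).choose m ≤ ∑ Q ∈ powersetCard t univ, (#(certifiedUnion P y₀ Q)).choose m := by
  have hcover : powersetCard m y₀.1ᶜ ⊆
      (powersetCard t univ).biUnion fun Q => powersetCard m (certifiedUnion P y₀ Q) := by
    intro x hx
    obtain ⟨hxy₀, hxm⟩ := mem_powersetCard.1 hx
    let x' : {x : Finset (Fin N) // x.card = m} := ⟨x, hxm⟩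
    refine mem_biUnion.2 ⟨P x' y₀, by simp [hPcard], mem_powersetCard.2 ⟨?_, hxm⟩⟩
    refine subset_biUnion_of_mem (u := Subtype.val) (x := x') (mem_filter.2 ⟨mem_univ _, ?_, rfl⟩)
    exact subset_compl_iff_disjoint_right.1 hxy₀
  calc (N - n).choose m = #(powersetCard m y₀.1ᶜ) := by simp [card_compl, y₀.2]
    _ ≤ _ := (card_le_card hcover).trans card_biUnion_le
    _ = _ := by simp only [card_powersetCard]

end SetDisjointness

theorem HasCertificates.exists_setDisj_tradeoff {N m n s w t : ℕ} (hmN : m ≤ N - n)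
    (hnN : 2 * n ≤ N) (hts : t ≤ s) (hcert : HasCertificates (setDisj N m n) s w t) :
    ∃ u, m ≤ u ∧ 2 ^ (n * u) ≤ (s.choose t * (2 ^ w) ^ t) ^ (N - n) ∧
      (N - n) ^ m ≤ s.choose t * u ^ m := by
  obtain ⟨T, P, hPcard, hP⟩ := hcert.exists_card_eq hts
  have : Nonempty {y : Finset (Fin N) // y.card = n} := by
    obtain ⟨y, hy⟩ := powersetCard_nonempty.2 (by simp; omega : n ≤ #(univ : Finset (Fin N)))
    exact ⟨⟨y, (mem_powersetCard.1 hy).2⟩⟩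
  obtain ⟨y₀, hy₀⟩ := exists_forall_card_le_mul_card_restrict_eq T t
  obtain ⟨Q, hQ, hmax⟩ := exists_max_image (powersetCard t univ)
    (fun Q => #(certifiedUnion P y₀ Q)) (powersetCard_nonempty.2 (by simpa using hts))
  set u := #(certifiedUnion P y₀ Q)
  have hu : u ≤ N - n := card_certifiedUnion_le y₀ Q
  have hcover : (N - n).choose m ≤ s.choose t * u.choose m := by
    calc (N - n).choose m ≤ ∑ Q ∈ powersetCard t univ, (#(certifiedUnion P y₀ Q)).choose m :=
          choose_le_sum_choose_card_certifiedUnion hPcard y₀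
      _ ≤ ∑ _Q ∈ powersetCard t univ, u.choose m :=
          sum_le_sum fun Q' hQ' => Nat.choose_le_choose m (hmax Q' hQ')
      _ = s.choose t * u.choose m := by simp
  have hmu : m ≤ u := by
    by_contra! hum
    have := (Nat.choose_pos hmN).trans_le hcover
    simp [Nat.choose_eq_zero_of_lt hum] at this
  refine ⟨u, hmu, Nat.two_pow_mul_le_pow_of_choose_le_mul_choose hnN (by omega) ?_,
    Nat.pow_le_mul_pow_of_choose_le_mul_choose hmu hu hcover⟩
  simpa [Fintype.card_finset_len] using
    (hy₀ Q hQ).trans (Nat.mul_le_mul_left _ (card_restrict_eq_le_choose hP y₀ Q))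

theorem setDisj_certificate_lower_bound_general (N m n s w t : ℕ)
    (hm : 1 ≤ m) (hmn : m ≤ n) (hnN : 2 * n < N)
    (hts : t ≤ s)
    (hcert : HasCertificates (setDisj N m n) s w t) :
    ∀ δ : ℝ, 0 < δ → δ < 1 →
      (n : ℝ) ^ ((1 : ℝ) - δ) ≤ (t : ℝ) * ((w : ℝ) + Real.logb 2 s) ∨
      (m : ℝ) * (δ * Real.logb 2 n - 1) ≤ (t : ℝ) * Real.logb 2 s := by
  intro δ _ _
  refine or_iff_not_imp_left.2 fun hbr => ?_
  obtain ⟨u, hmu, h₁, h₂⟩ := hcert.exists_setDisj_tradeoff (by omega) hnN.le hts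
  have hκ : 0 < s.choose t := Nat.choose_pos hts
  have hlogκ : Real.logb 2 (s.choose t) ≤ t * Real.logb 2 s := by
    rw [← Real.logb_pow]
    exact Real.logb_le_logb_of_le one_lt_two (by exact_mod_cast hκ)
      (by exact_mod_cast Nat.choose_le_pow s t)
  have hA : Real.logb 2 ((s.choose t * (2 ^ w) ^ t : ℕ) : ℝ) ≤ (n : ℝ) ^ (1 - δ) := by
    rw [Nat.cast_mul, Real.logb_mul (by positivity) (by positivity), Nat.cast_pow, Real.logb_pow,
      Nat.cast_pow, Real.logb_pow, Nat.cast_ofNat, Real.logb_self_eq_one one_lt_two]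
    linarith [not_le.1 hbr]
  have := mul_logb_le_logb_of_two_pow_le (by omega) (by omega) h₁ h₂ hA
  linarith [(m.cast_nonneg : (0 : ℝ) ≤ m)]

/-- Certificate lower bound for set disjointness: if it has `(s,w,t)`-certificates, then
for every `0 < δ < 1`, either `t·(w + log₂ s) ≥ n^{1−δ}` or `t·log₂ s ≥ m·(δ·log₂ n − 1)`. -/
theorem setDisj_certificate_lower_bound (N m n s w t : ℕ)
    (hm : 1 ≤ m) (hmn : m ≤ n) (hnN : 2 * n < N)
    (hs : 2 ≤ s) (hw : 1 ≤ w) (ht : 1 ≤ t) (hts : t ≤ s)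
    (hcert : HasCertificates (setDisj N m n) s w t) :
    ∀ δ : ℝ, 0 < δ → δ < 1 →
      (n : ℝ) ^ ((1 : ℝ) - δ) ≤ (t : ℝ) * ((w : ℝ) + Real.logb 2 s) ∨
      (m : ℝ) * (δ * Real.logb 2 n - 1) ≤ (t : ℝ) * Real.logb 2 s :=
  setDisj_certificate_lower_bound_general N m n s w t hm hmn hnN hts hcert
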